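/- Let V_1 ∈ Gr_l(m) and W ∈ Gr_q(m) with 1 ≤ q ≤ l ≤ m and suppose every line in W is at distance at least ε > 0 (in the metric d on projective lines given by operator-norm distance of orthogonal projections) from every line in the orthogonal complement V_1^⊥. Then there exists δ = δ(ε) > 0 such that for any linear isometry F : ℝ^l → V_1, the q-th singular value of π_W ∘ F is at least δ, where π_W is (a coordinate identification of) the orthogonal projection onto W. -/

import Mathlib

/-- The orthogonal projection onto a subspace `K` of `ℝ^m`, as an endomorphism of `ℝ^m`. -/
noncomputable def projL {m : ℕ} (K : Submodule ℝ (EuclideanSpace ℝ (Fin m))) :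
    EuclideanSpace ℝ (Fin m) →L[ℝ] EuclideanSpace ℝ (Fin m) :=
  K.subtypeL.comp (K.orthogonalProjection)

/-- `κ(V₁,V₂)`: the infimum over lines `L₁ ⊆ V₁`, `L₂ ⊆ V₂` of the projective distance
`‖P_{L₁} − P_{L₂}‖_op`. -/
noncomputable def kappa {m : ℕ} (V₁ V₂ : Submodule ℝ (EuclideanSpace ℝ (Fin m))) : ℝ :=
  ⨅ p : {L : Submodule ℝ (EuclideanSpace ℝ (Fin m)) // L ≤ V₁ ∧ Module.finrank ℝ L = 1} ×
      {L : Submodule ℝ (EuclideanSpace ℝ (Fin m)) // L ≤ V₂ ∧ Module.finrank ℝ L = 1},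
    ‖projL p.1.1 - projL p.2.1‖

/-- The `l`-th singular value of a linear map `T : ℝ^d → ℝ^m`, via the min-max
characterization. -/
noncomputable def singVal {d m : ℕ}
    (T : EuclideanSpace ℝ (Fin d) →ₗ[ℝ] EuclideanSpace ℝ (Fin m)) (l : ℕ) : ℝ :=
  ⨅ V : {V : Submodule ℝ (EuclideanSpace ℝ (Fin d)) // Module.finrank ℝ V = d + 1 - l},
    ⨆ x : {x : EuclideanSpace ℝ (Fin d) // x ∈ V.1 ∧ ‖x‖ = 1}, ‖T x‖

/-!
For a unit vector `u ∈ W`, the line through the component of `u` in `V₁ᗮ` lies at projective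
distance at most `√(1 - ‖P_{V₁ᗮ} u‖²) = ‖P_{V₁} u‖` from `ℝ ∙ u`, so `κ(W, V₁ᗮ) ≥ ε` forces
`‖P_{V₁} u‖ ≥ min ε 1`. For `y = P_{V₁} u` this gives
`min ε 1 * ‖y‖ * ‖u‖ ≤ ‖y‖² = ⟪P_W y, u⟫ ≤ ‖P_W y‖ * ‖u‖`, so `P_W` stretches the `q`-dimensional
subspace `P_{V₁}(W) ⊆ V₁` by at least `δ = min ε 1`. Any `(l + 1 - q)`-dimensional subspace of
`ℝ^l` is mapped by `F` into `V₁ = F(ℝ^l)`, where it meets `P_{V₁}(W)` for dimension reasons, and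
the min-max characterization of `singVal` concludes.
-/

open Module Submodule
open scoped RealInnerProductSpace

section InnerProductSpace

variable {E : Type*} [NormedAddCommGroup E] [InnerProductSpace ℝ E]

theorem Submodule.real_inner_starProjection_self (K : Submodule ℝ E) [K.HasOrthogonalProjection]
    (u : E) : ⟪K.starProjection u, u⟫ = ‖K.starProjection u‖ ^ 2 :=
  K.re_inner_starProjection_eq_normSq u

theorem norm_inner_smul_sub_inner_smul_sq_le {u v : E} (hu : ‖u‖ = 1) (hv : ‖v‖ = 1) (x : E) :
    ‖⟪u, x⟫ • u - ⟪v, x⟫ • v‖ ^ 2 ≤ (1 - ⟪u, v⟫ ^ 2) * ‖x‖ ^ 2 := by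
  -- With `a = ⟪u, x⟫`, `b = ⟪v, x⟫`, `c = ⟪u, v⟫` the left side is `(b - a c)² + a² (1 - c²)`, and
  -- Cauchy–Schwarz for the components of `v` and `x` orthogonal to `u` gives
  -- `(b - a c)² ≤ (1 - c²) (‖x‖² - a²)`.
  have hcs := real_inner_mul_inner_self_le (v - ⟪u, v⟫ • u) (x - ⟪u, x⟫ • u)
  simp only [inner_sub_left, inner_sub_right, real_inner_smul_left, real_inner_smul_right,
    real_inner_self_eq_norm_sq, real_inner_comm u, norm_smul, Real.norm_eq_abs, mul_pow, sq_abs,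
    hu, hv] at hcs
  rw [norm_sub_sq_real, norm_smul, norm_smul, real_inner_smul_left, real_inner_smul_right,
    Real.norm_eq_abs, Real.norm_eq_abs, mul_pow, mul_pow, sq_abs, sq_abs, hu, hv]
  linear_combination hcs

theorem norm_starProjection_span_sub_le {u v : E} (hu : ‖u‖ = 1) (hv : ‖v‖ = 1) :
    ‖(ℝ ∙ u).starProjection - (ℝ ∙ v).starProjection‖ ≤ √(1 - ⟪u, v⟫ ^ 2) := by
  refine ContinuousLinearMap.opNorm_le_bound _ (Real.sqrt_nonneg _) fun x => ?_
  rw [sub_apply, starProjection_unit_singleton ℝ hu,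
    starProjection_unit_singleton ℝ hv, ← Real.sqrt_sq (norm_nonneg _),
    ← Real.sqrt_sq (norm_nonneg x), ← Real.sqrt_mul' _ (sq_nonneg _)]
  exact Real.sqrt_le_sqrt (norm_inner_smul_sub_inner_smul_sq_le hu hv x)

end InnerProductSpace

section LinearAlgebra

variable {K V : Type*} [Field K] [AddCommGroup V] [Module K V]

theorem Submodule.finrank_map_of_disjoint_ker {V' : Type*} [AddCommGroup V'] [Module K V']
    (f : V →ₗ[K] V') (p : Submodule K V) (h : Disjoint p (LinearMap.ker f)) :
    finrank K (p.map f) = finrank K p := by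
  have hinj : Function.Injective (f ∘ₗ p.subtype) := by
    rwa [← LinearMap.ker_eq_bot, LinearMap.ker_comp, ← disjoint_iff_comap_eq_bot]
  rw [← LinearMap.finrank_range_of_inj hinj, LinearMap.range_comp, range_subtype]

theorem Submodule.exists_ne_zero_mem_inf_of_finrank_lt [FiniteDimensional K V]
    {s t U : Submodule K V} (hs : s ≤ U) (ht : t ≤ U)
    (h : finrank K U < finrank K s + finrank K t) : ∃ x ∈ s ⊓ t, x ≠ 0 := by
  have hsup := finrank_mono (sup_le hs ht)
  have hpos : 0 < finrank K (s ⊓ t : Submodule K V) := by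
    have := finrank_sup_add_finrank_inf_eq s t
    omega
  obtain ⟨x, hx⟩ := finrank_pos_iff_exists_ne_zero.1 hpos
  exact ⟨x, x.2, fun h0 => hx (Subtype.ext h0)⟩

theorem exists_submodule_finrank_eq {n : ℕ} (hn : n ≤ finrank K V) :
    ∃ W : Submodule K V, finrank K W = n := by
  obtain ⟨f, hf⟩ := exists_linearIndependent_of_le_finrank hn
  exact ⟨span K (Set.range f), by rw [finrank_span_eq_card hf, Fintype.card_fin]⟩

end LinearAlgebra

section Euclidean

variable {m : ℕ}
local notation "E" => EuclideanSpace ℝ (Fin m)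

theorem kappa_le_norm_projL_sub {V₁ V₂ L₁ L₂ : Submodule ℝ E} (h₁ : L₁ ≤ V₁ ∧ finrank ℝ L₁ = 1)
    (h₂ : L₂ ≤ V₂ ∧ finrank ℝ L₂ = 1) : kappa V₁ V₂ ≤ ‖projL L₁ - projL L₂‖ := by
  have hb : BddBelow (Set.range fun p :
      {L : Submodule ℝ E // L ≤ V₁ ∧ finrank ℝ L = 1} ×
      {L : Submodule ℝ E // L ≤ V₂ ∧ finrank ℝ L = 1} => ‖projL p.1.1 - projL p.2.1‖) := by
    refine ⟨0, ?_⟩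
    rintro _ ⟨p, rfl⟩
    exact norm_nonneg _
  exact ciInf_le hb ⟨⟨L₁, h₁⟩, ⟨L₂, h₂⟩⟩

theorem kappa_le_norm_projL_span_sub {V₁ V₂ : Submodule ℝ E} {u v : E} (hu : u ∈ V₁) (hu0 : u ≠ 0)
    (hv : v ∈ V₂) (hv0 : v ≠ 0) : kappa V₁ V₂ ≤ ‖projL (ℝ ∙ u) - projL (ℝ ∙ v)‖ :=
  kappa_le_norm_projL_sub ⟨(span_singleton_le_iff_mem u V₁).2 hu, finrank_span_singleton hu0⟩
    ⟨(span_singleton_le_iff_mem v V₂).2 hv, finrank_span_singleton hv0⟩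

theorem disjoint_of_kappa_pos {V₁ V₂ : Submodule ℝ E} (h : 0 < kappa V₁ V₂) : Disjoint V₁ V₂ := by
  refine disjoint_def.2 fun u hu₁ hu₂ => by_contra fun hu0 => ?_
  have := kappa_le_norm_projL_span_sub hu₁ hu0 hu₂ hu0
  rw [sub_self, norm_zero] at this
  linarith

theorem kappa_le_sqrt_one_sub_inner_sq {V₁ V₂ : Submodule ℝ E} {u v : E} (hu : u ∈ V₁)
    (hv : v ∈ V₂) (hu1 : ‖u‖ = 1) (hv1 : ‖v‖ = 1) : kappa V₁ V₂ ≤ √(1 - ⟪u, v⟫ ^ 2) :=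
  (kappa_le_norm_projL_span_sub hu (ne_zero_of_norm_ne_zero (hu1 ▸ one_ne_zero)) hv
    (ne_zero_of_norm_ne_zero (hv1 ▸ one_ne_zero))).trans (norm_starProjection_span_sub_le hu1 hv1)

theorem min_le_norm_starProjection_of_le_kappa {W K : Submodule ℝ E} {ε : ℝ}
    (hk : ε ≤ kappa W Kᗮ) {u : E} (hu : u ∈ W) (hu1 : ‖u‖ = 1) :
    min ε 1 ≤ ‖K.starProjection u‖ := by
  by_cases h1 : 1 ≤ ‖K.starProjection u‖
  · exact (min_le_right ε 1).trans h1
  set p := Kᗮ.starProjection u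
  have hpyth : ‖K.starProjection u‖ ^ 2 + ‖p‖ ^ 2 = 1 := by
    rw [← K.norm_sq_eq_add_norm_sq_starProjection u, hu1, one_pow]
  have hp0 : p ≠ 0 := by
    intro hp
    rw [hp, norm_zero] at hpyth
    nlinarith [norm_nonneg (K.starProjection u)]
  -- The line `ℝ ∙ p ⊆ Kᗮ` makes with `u` an angle of cosine `‖p‖`, so its distance from `ℝ ∙ u` is
  -- at most `√(1 - ‖p‖²) = ‖K.starProjection u‖`.
  have hcos : ⟪u, ‖p‖⁻¹ • p⟫ = ‖p‖ := by
    have hup : ⟪u, p⟫ = ‖p‖ ^ 2 := (real_inner_comm _ _).trans (Kᗮ.real_inner_starProjection_self u)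
    rw [real_inner_smul_right, hup]
    field_simp [norm_ne_zero_iff.2 hp0]
  calc min ε 1 ≤ kappa W Kᗮ := (min_le_left ε 1).trans hk
    _ ≤ √(1 - ⟪u, ‖p‖⁻¹ • p⟫ ^ 2) :=
      kappa_le_sqrt_one_sub_inner_sq hu (Kᗮ.smul_mem _ (Kᗮ.starProjection_apply_mem u)) hu1
        (norm_smul_inv_norm hp0)
    _ = ‖K.starProjection u‖ := by
      rw [hcos, ← hpyth, add_sub_cancel_right, Real.sqrt_sq (norm_nonneg _)]

theorem min_mul_norm_le_norm_starProjection_of_le_kappa {W K : Submodule ℝ E} {ε : ℝ}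
    (hk : ε ≤ kappa W Kᗮ) {u : E} (hu : u ∈ W) : min ε 1 * ‖u‖ ≤ ‖K.starProjection u‖ := by
  rcases eq_or_ne u 0 with rfl | hu0
  · simp
  have h := min_le_norm_starProjection_of_le_kappa hk (W.smul_mem ‖u‖⁻¹ hu)
    (norm_smul_inv_norm hu0)
  rwa [map_smul, norm_smul, norm_inv, norm_norm, le_inv_mul_iff₀ (norm_pos_iff.2 hu0),
    mul_comm] at h

theorem min_mul_norm_le_norm_starProjection_starProjection {W K : Submodule ℝ E} {ε : ℝ}
    (hk : ε ≤ kappa W Kᗮ) {u : E} (hu : u ∈ W) :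
    min ε 1 * ‖K.starProjection u‖ ≤ ‖W.starProjection (K.starProjection u)‖ := by
  rcases eq_or_ne u 0 with rfl | hu0
  · simp
  have hy : ‖K.starProjection u‖ ^ 2 ≤ ‖W.starProjection (K.starProjection u)‖ * ‖u‖ :=
    calc ‖K.starProjection u‖ ^ 2 = ⟪K.starProjection u, u⟫ :=
          (K.real_inner_starProjection_self u).symm
      _ = ⟪K.starProjection u, W.starProjection u⟫ := by rw [W.starProjection_eq_self_iff.2 hu]
      _ = ⟪W.starProjection (K.starProjection u), u⟫ :=
          (W.inner_starProjection_left_eq_right _ _).symm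
      _ ≤ ‖W.starProjection (K.starProjection u)‖ * ‖u‖ := real_inner_le_norm _ _
  have hu' := min_mul_norm_le_norm_starProjection_of_le_kappa hk hu
  refine le_of_mul_le_mul_right ?_ (norm_pos_iff.2 hu0)
  nlinarith [norm_nonneg (K.starProjection u)]

theorem le_singVal_of_forall_exists {d n k : ℕ}
    (T : EuclideanSpace ℝ (Fin d) →ₗ[ℝ] EuclideanSpace ℝ (Fin n)) {δ : ℝ} (hk : 1 ≤ k)
    (h : ∀ V : Submodule ℝ (EuclideanSpace ℝ (Fin d)), finrank ℝ V = d + 1 - k →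
      ∃ x ∈ V, x ≠ 0 ∧ δ * ‖x‖ ≤ ‖T x‖) :
    δ ≤ singVal T k := by
  obtain ⟨V₀, hV₀⟩ := exists_submodule_finrank_eq (K := ℝ) (V := EuclideanSpace ℝ (Fin d))
    (n := d + 1 - k) (by rw [finrank_euclideanSpace_fin]; omega)
  have : Nonempty {V : Submodule ℝ (EuclideanSpace ℝ (Fin d)) // finrank ℝ V = d + 1 - k} :=
    ⟨⟨V₀, hV₀⟩⟩
  refine le_ciInf fun V => ?_
  obtain ⟨x, hxV, hx0, hx⟩ := h V.1 V.2
  have hbdd : BddAbove (Set.range fun x : {x // x ∈ V.1 ∧ ‖x‖ = 1} => ‖T x‖) := by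
    refine ⟨‖LinearMap.toContinuousLinearMap T‖, Set.forall_mem_range.2 fun x => ?_⟩
    simpa [x.2.2] using (LinearMap.toContinuousLinearMap T).le_opNorm x
  refine le_ciSup_of_le hbdd ⟨‖x‖⁻¹ • x, V.1.smul_mem _ hxV, norm_smul_inv_norm hx0⟩ ?_
  rwa [map_smul, norm_smul, norm_inv, norm_norm, le_inv_mul_iff₀ (norm_pos_iff.2 hx0),
    mul_comm]

end Euclidean

theorem exists_delta_singVal_proj_comp_general {m l q : ℕ} (hq : 1 ≤ q)
    {ε : ℝ} (hε : 0 < ε) :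
    ∃ δ : ℝ, 0 < δ ∧ ∀ (V₁ W : Submodule ℝ (EuclideanSpace ℝ (Fin m))),
      Module.finrank ℝ V₁ = l → Module.finrank ℝ W = q →
      ε ≤ kappa W V₁ᗮ →
      ∀ (g : W ≃ₗᵢ[ℝ] EuclideanSpace ℝ (Fin q))
        (F : EuclideanSpace ℝ (Fin l) →ₗᵢ[ℝ] EuclideanSpace ℝ (Fin m)),
        LinearMap.range F.toLinearMap = V₁ →
        δ ≤ singVal (g.toLinearEquiv.toLinearMap.comp
          (((W.orthogonalProjection).toLinearMap).comp F.toLinearMap)) q := by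
  refine ⟨min ε 1, lt_min hε one_pos, fun V₁ W hV₁ hW hk g F hF =>
    le_singVal_of_forall_exists _ hq fun V hV => ?_⟩
  have hWV₁ : Disjoint W V₁.starProjection.ker := by
    rw [ker_starProjection]
    exact disjoint_of_kappa_pos (hε.trans_le hk)
  have hA : finrank ℝ (W.map V₁.starProjection.toLinearMap) = q := by
    rw [finrank_map_of_disjoint_ker _ _ hWV₁, hW]
  have hB : finrank ℝ (V.map F.toLinearMap) = l + 1 - q := by
    rw [finrank_map_of_disjoint_ker _ _ (by simp [LinearMap.ker_eq_bot.2 F.injective]), hV]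
  obtain ⟨_, ⟨⟨u, hu, rfl⟩, x, hx, hxu⟩, hne⟩ := exists_ne_zero_mem_inf_of_finrank_lt
    (s := W.map V₁.starProjection.toLinearMap) (t := V.map F.toLinearMap)
    (map_le_iff_le_comap.2 fun u _ => V₁.starProjection_apply_mem u)
    (hF ▸ LinearMap.map_le_range) (by omega)
  simp only [ContinuousLinearMap.coe_coe, LinearIsometry.coe_toLinearMap] at hxu hne
  refine ⟨x, hx, fun hx0 => hne (by rw [← hxu, hx0, map_zero]), ?_⟩
  calc min ε 1 * ‖x‖ = min ε 1 * ‖V₁.starProjection u‖ := by rw [← hxu, F.norm_map]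
    _ ≤ ‖W.starProjection (V₁.starProjection u)‖ :=
      min_mul_norm_le_norm_starProjection_starProjection hk hu
    _ = _ := by simp [← hxu]

/-- If every line of `W ∈ Gr_q(m)` is at distance `≥ ε` from every line of `V₁^⊥`
(`V₁ ∈ Gr_l(m)`), then there is `δ = δ(ε) > 0` such that for every linear isometry
`F : ℝ^l → V₁`, the `q`-th singular value of `π_W ∘ F` is at least `δ`. -/
theorem exists_delta_singVal_proj_comp {m l q : ℕ} (hq : 1 ≤ q) (hql : q ≤ l) (hlm : l ≤ m)
    {ε : ℝ} (hε : 0 < ε) :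
    ∃ δ : ℝ, 0 < δ ∧ ∀ (V₁ W : Submodule ℝ (EuclideanSpace ℝ (Fin m))),
      Module.finrank ℝ V₁ = l → Module.finrank ℝ W = q →
      ε ≤ kappa W V₁ᗮ →
      ∀ (g : W ≃ₗᵢ[ℝ] EuclideanSpace ℝ (Fin q))
        (F : EuclideanSpace ℝ (Fin l) →ₗᵢ[ℝ] EuclideanSpace ℝ (Fin m)),
        LinearMap.range F.toLinearMap = V₁ →
        δ ≤ singVal (g.toLinearEquiv.toLinearMap.comp
          (((W.orthogonalProjection).toLinearMap).comp F.toLinearMap)) q :=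
  exists_delta_singVal_proj_comp_general hq hε
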